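/- Let r, ψ be twice continuously differentiable and ϖ₁ continuously differentiable on an open set U ⊆ ℝ², with r > 0, rᵤ < 0 < rᵥ, and ϖ₁ ≠ r³/(2l²) on U; define Ω² = 2rᵤrᵥr/(ϖ₁ − r³/(2l²)) and assume Ω² > 0 on U. Suppose that equations (EKG3) and (EKG5) hold, and that ϖ₁ satisfies the transport equations ∂ᵤϖ₁ = −8πr²(rᵥ/Ω²)ψᵤ² + (4πr²a/l²)rᵤψ² and ∂ᵥϖ₁ = −8πr²(rᵤ/Ω²)ψᵥ² + (4πr²a/l²)rᵥψ². Then equations (EKG1) and (EKG2) hold on U. -/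

import Mathlib

/-!
Near each point, the definition of `Ω²` turns `rᵤ/Ω²` into `(ϖ₁ - r³/(2l²)) / (2 rᵥ r)`. Its
`u`-derivative is then a quotient-rule computation in which `∂ᵤϖ₁` is given by the transport
equation and `rᵥᵤ = rᵤᵥ` (symmetry of second derivatives) by (EKG3); all terms except
`-4π r ψᵤ² / Ω²` cancel. The `v`-equation is the same computation with `u` and `v` exchanged.
-/

/-- Partial derivative in the first (`u`) coordinate. -/
noncomputable def pdu (f : ℝ × ℝ → ℝ) (p : ℝ × ℝ) : ℝ := deriv (fun u => f (u, p.2)) p.1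

/-- Partial derivative in the second (`v`) coordinate. -/
noncomputable def pdv (f : ℝ × ℝ → ℝ) (p : ℝ × ℝ) : ℝ := deriv (fun v => f (p.1, v)) p.2

open Filter Topology

section PartialDerivatives

variable {f g : ℝ × ℝ → ℝ} {p : ℝ × ℝ}

lemma tendsto_slice_fst (p : ℝ × ℝ) : Tendsto (fun u : ℝ => (u, p.2)) (𝓝 p.1) (𝓝 p) :=
  (continuous_id.prodMk continuous_const).tendsto p.1

lemma tendsto_slice_snd (p : ℝ × ℝ) : Tendsto (fun v : ℝ => (p.1, v)) (𝓝 p.2) (𝓝 p) :=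
  (continuous_const.prodMk continuous_id).tendsto p.2

lemma Filter.EventuallyEq.pdu_eq (h : f =ᶠ[𝓝 p] g) : pdu f p = pdu g p :=
  (h.comp_tendsto (tendsto_slice_fst p)).deriv_eq

lemma Filter.EventuallyEq.pdv_eq (h : f =ᶠ[𝓝 p] g) : pdv f p = pdv g p :=
  (h.comp_tendsto (tendsto_slice_snd p)).deriv_eq

lemma HasFDerivAt.hasDerivAt_slice_fst {F : Type*} [NormedAddCommGroup F] [NormedSpace ℝ F]
    {f : ℝ × ℝ → F} {f' : ℝ × ℝ →L[ℝ] F} (hf : HasFDerivAt f f' p) :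
    HasDerivAt (fun u => f (u, p.2)) (f' (1, 0)) p.1 :=
  hf.comp_hasDerivAt p.1 ((hasDerivAt_id p.1).prodMk (hasDerivAt_const p.1 p.2))

lemma HasFDerivAt.hasDerivAt_slice_snd {F : Type*} [NormedAddCommGroup F] [NormedSpace ℝ F]
    {f : ℝ × ℝ → F} {f' : ℝ × ℝ →L[ℝ] F} (hf : HasFDerivAt f f' p) :
    HasDerivAt (fun v => f (p.1, v)) (f' (0, 1)) p.2 :=
  hf.comp_hasDerivAt p.2 ((hasDerivAt_const p.2 p.1).prodMk (hasDerivAt_id p.2))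

lemma DifferentiableAt.hasDerivAt_pdu (hf : DifferentiableAt ℝ f p) :
    HasDerivAt (fun u => f (u, p.2)) (pdu f p) p.1 :=
  hf.hasFDerivAt.hasDerivAt_slice_fst.differentiableAt.hasDerivAt

lemma DifferentiableAt.hasDerivAt_pdv (hf : DifferentiableAt ℝ f p) :
    HasDerivAt (fun v => f (p.1, v)) (pdv f p) p.2 :=
  hf.hasFDerivAt.hasDerivAt_slice_snd.differentiableAt.hasDerivAt

lemma DifferentiableAt.pdu_eq_fderiv (hf : DifferentiableAt ℝ f p) :
    pdu f p = fderiv ℝ f p (1, 0) :=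
  hf.hasFDerivAt.hasDerivAt_slice_fst.deriv

lemma DifferentiableAt.pdv_eq_fderiv (hf : DifferentiableAt ℝ f p) :
    pdv f p = fderiv ℝ f p (0, 1) :=
  hf.hasFDerivAt.hasDerivAt_slice_snd.deriv

lemma ContDiffAt.eventually_differentiableAt (hf : ContDiffAt ℝ 2 f p) :
    ∀ᶠ q in 𝓝 p, DifferentiableAt ℝ f q :=
  (hf.eventually (by simp)).mono fun _ hq => hq.differentiableAt (by norm_num)

lemma ContDiffAt.hasDerivAt_pdv_slice_fst (hf : ContDiffAt ℝ 2 f p) :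
    HasDerivAt (fun u => pdv f (u, p.2)) (fderiv ℝ (fderiv ℝ f) p (1, 0) (0, 1)) p.1 := by
  have hB := ((hf.fderiv_right le_rfl).differentiableAt one_ne_zero).hasFDerivAt
  refine ((ContinuousLinearMap.apply ℝ ℝ ((0 : ℝ), (1 : ℝ))).hasFDerivAt.comp_hasDerivAt p.1
    hB.hasDerivAt_slice_fst).congr_of_eventuallyEq ?_
  filter_upwards [(tendsto_slice_fst p).eventually hf.eventually_differentiableAt] with u hu
  exact hu.pdv_eq_fderiv

lemma ContDiffAt.hasDerivAt_pdu_slice_snd (hf : ContDiffAt ℝ 2 f p) :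
    HasDerivAt (fun v => pdu f (p.1, v)) (fderiv ℝ (fderiv ℝ f) p (0, 1) (1, 0)) p.2 := by
  have hB := ((hf.fderiv_right le_rfl).differentiableAt one_ne_zero).hasFDerivAt
  refine ((ContinuousLinearMap.apply ℝ ℝ ((1 : ℝ), (0 : ℝ))).hasFDerivAt.comp_hasDerivAt p.2
    hB.hasDerivAt_slice_snd).congr_of_eventuallyEq ?_
  filter_upwards [(tendsto_slice_snd p).eventually hf.eventually_differentiableAt] with v hv
  exact hv.pdu_eq_fderiv

lemma ContDiffAt.hasDerivAt_pdu_pdv (hf : ContDiffAt ℝ 2 f p) :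
    HasDerivAt (fun v => pdu f (p.1, v)) (pdv (pdu f) p) p.2 :=
  hf.hasDerivAt_pdu_slice_snd.differentiableAt.hasDerivAt

lemma ContDiffAt.hasDerivAt_pdv_pdu (hf : ContDiffAt ℝ 2 f p) :
    HasDerivAt (fun u => pdv f (u, p.2)) (pdv (pdu f) p) p.1 := by
  have hmixed : pdv (pdu f) p = fderiv ℝ (fderiv ℝ f) p (0, 1) (1, 0) :=
    hf.hasDerivAt_pdu_slice_snd.deriv
  rw [hmixed, ← hf.isSymmSndFDerivAt (by simp)]
  exact hf.hasDerivAt_pdv_slice_fst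

end PartialDerivatives

/-- `R`, `W`, `S` are `r`, `ϖ₁` and the transverse derivative of `r` along one coordinate line. -/
lemma HasDerivAt.raychaudhuri {R W S : ℝ → ℝ} {t x z w' ψ ψ' Ω l a : ℝ}
    (hR : HasDerivAt R x t) (hW : HasDerivAt W w' t) (hS : HasDerivAt S z t)
    (hl : l ≠ 0) (hR0 : R t ≠ 0) (hS0 : S t ≠ 0)
    (hD : W t - R t ^ 3 / (2 * l ^ 2) ≠ 0)
    (hΩ : Ω = 2 * x * S t * R t / (W t - R t ^ 3 / (2 * l ^ 2)))
    (hz : z = -(x * S t) / R t + (2 * Real.pi * a * R t / l ^ 2) * Ω * ψ ^ 2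
        - (3 / 4) * (R t / l ^ 2) * Ω)
    (hw' : w' = -(8 * Real.pi) * R t ^ 2 * (S t / Ω) * ψ' ^ 2
        + (4 * Real.pi * R t ^ 2 * a / l ^ 2) * x * ψ ^ 2) :
    HasDerivAt (fun s => (W s - R s ^ 3 / (2 * l ^ 2)) / (2 * S s * R s))
      (-(4 * Real.pi) * R t * ψ' ^ 2 / Ω) t := by
  refine ((hW.sub ((hR.pow 3).div_const _)).div ((hS.const_mul 2).mul hR)
    (by simp [hR0, hS0])).congr_deriv ?_
  simp only [Pi.sub_apply, Pi.mul_apply, Pi.pow_apply]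
  rw [hz, hw', hΩ]
  generalize W t - R t ^ 3 / (2 * l ^ 2) = D at hD ⊢
  field_simp
  ring

theorem stmt_3_general (U : Set (ℝ × ℝ)) (hU : IsOpen U)
    (r ψ ϖ₁ Ω2 : ℝ × ℝ → ℝ)
    (l a : ℝ) (hl : 0 < l)
    (hrC : ContDiffOn ℝ 2 r U) (hϖC : ContDiffOn ℝ 1 ϖ₁ U)
    (hrpos : ∀ p ∈ U, 0 < r p)
    (hru : ∀ p ∈ U, pdu r p < 0) (hrv : ∀ p ∈ U, 0 < pdv r p)
    (hne : ∀ p ∈ U, ϖ₁ p ≠ (r p) ^ 3 / (2 * l ^ 2))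
    (hΩ2 : ∀ p ∈ U, Ω2 p = 2 * pdu r p * pdv r p * r p / (ϖ₁ p - (r p) ^ 3 / (2 * l ^ 2)))
    (hEKG3 : ∀ p ∈ U, pdv (pdu r) p = -(pdu r p * pdv r p) / r p
        + (2 * Real.pi * a * r p / l ^ 2) * Ω2 p * (ψ p) ^ 2
        - (3 / 4) * (r p / l ^ 2) * Ω2 p)
    (hT1 : ∀ p ∈ U, pdu ϖ₁ p = -(8 * Real.pi) * (r p) ^ 2 * (pdv r p / Ω2 p) * (pdu ψ p) ^ 2
        + (4 * Real.pi * (r p) ^ 2 * a / l ^ 2) * pdu r p * (ψ p) ^ 2)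
    (hT2 : ∀ p ∈ U, pdv ϖ₁ p = -(8 * Real.pi) * (r p) ^ 2 * (pdu r p / Ω2 p) * (pdv ψ p) ^ 2
        + (4 * Real.pi * (r p) ^ 2 * a / l ^ 2) * pdv r p * (ψ p) ^ 2) :
    ∀ p ∈ U,
      pdu (fun q => pdu r q / Ω2 q) p = -(4 * Real.pi) * r p * (pdu ψ p) ^ 2 / Ω2 p ∧
      pdv (fun q => pdv r q / Ω2 q) p = -(4 * Real.pi) * r p * (pdv ψ p) ^ 2 / Ω2 p := by
  intro p hp
  have hUp := hU.mem_nhds hp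
  have hr2 : ContDiffAt ℝ 2 r p := hrC.contDiffAt hUp
  have hr1 : DifferentiableAt ℝ r p := hr2.differentiableAt (by norm_num)
  have hϖ1 : DifferentiableAt ℝ ϖ₁ p := (hϖC.contDiffAt hUp).differentiableAt one_ne_zero
  have hnz : ∀ q ∈ U, r q ≠ 0 ∧ pdu r q ≠ 0 ∧ pdv r q ≠ 0 ∧ ϖ₁ q - r q ^ 3 / (2 * l ^ 2) ≠ 0 :=
    fun q hq => ⟨(hrpos q hq).ne', (hru q hq).ne, (hrv q hq).ne', sub_ne_zero.mpr (hne q hq)⟩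
  obtain ⟨hr, hx, hy, hD⟩ := hnz p hp
  have hquot : ∀ q ∈ U, pdu r q / Ω2 q = (ϖ₁ q - r q ^ 3 / (2 * l ^ 2)) / (2 * pdv r q * r q) ∧
      pdv r q / Ω2 q = (ϖ₁ q - r q ^ 3 / (2 * l ^ 2)) / (2 * pdu r q * r q) := by
    intro q hq
    obtain ⟨hr, hx, hy, hD⟩ := hnz q hq
    rw [hΩ2 q hq]
    constructor <;> field_simp
  constructor
  · rw [Filter.EventuallyEq.pdu_eq (eventually_of_mem hUp fun q hq => (hquot q hq).1)]
    exact (hr1.hasDerivAt_pdu.raychaudhuri hϖ1.hasDerivAt_pdu hr2.hasDerivAt_pdv_pdu hl.ne'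
      hr hy hD (hΩ2 p hp) (hEKG3 p hp) (hT1 p hp)).deriv
  · rw [Filter.EventuallyEq.pdv_eq (eventually_of_mem hUp fun q hq => (hquot q hq).2)]
    exact (hr1.hasDerivAt_pdv.raychaudhuri hϖ1.hasDerivAt_pdv hr2.hasDerivAt_pdu_pdv hl.ne'
      hr hx hD (by rw [hΩ2 p hp]; ring) (by rw [hEKG3 p hp]; ring) (hT2 p hp)).deriv

/-- Suppose `r, ψ` are `C²`, `ϖ₁` is `C¹` on an open set `U`, with `r > 0`,
`rᵤ < 0 < rᵥ`, `ϖ₁ ≠ r³/(2l²)`; define `Ω² = 2rᵤrᵥr/(ϖ₁ − r³/(2l²))` (assumed positive).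
If (EKG3), (EKG5) and the transport equations for `ϖ₁` hold, then the Raychaudhuri
equations (EKG1) and (EKG2) hold on `U`. -/
theorem stmt_3 (U : Set (ℝ × ℝ)) (hU : IsOpen U)
    (r ψ ϖ₁ Ω2 : ℝ × ℝ → ℝ)
    (l κ a g : ℝ) (hl : 0 < l) (hκ : κ ∈ Set.Ioo (0 : ℝ) 1)
    (ha : a = κ ^ 2 / 2 - 9 / 8) (hg : g = -3 / 2 + κ)
    (hrC : ContDiffOn ℝ 2 r U) (hψC : ContDiffOn ℝ 2 ψ U) (hϖC : ContDiffOn ℝ 1 ϖ₁ U)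
    (hrpos : ∀ p ∈ U, 0 < r p)
    (hru : ∀ p ∈ U, pdu r p < 0) (hrv : ∀ p ∈ U, 0 < pdv r p)
    (hne : ∀ p ∈ U, ϖ₁ p ≠ (r p) ^ 3 / (2 * l ^ 2))
    (hΩ2 : ∀ p ∈ U, Ω2 p = 2 * pdu r p * pdv r p * r p / (ϖ₁ p - (r p) ^ 3 / (2 * l ^ 2)))
    (hΩ2pos : ∀ p ∈ U, 0 < Ω2 p)
    (hEKG3 : ∀ p ∈ U, pdv (pdu r) p = -(pdu r p * pdv r p) / r p
        + (2 * Real.pi * a * r p / l ^ 2) * Ω2 p * (ψ p) ^ 2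
        - (3 / 4) * (r p / l ^ 2) * Ω2 p)
    (hEKG5 : ∀ p ∈ U, pdv (pdu ψ) p = -(pdu r p / r p) * pdv ψ p
        - (pdv r p / r p) * pdu ψ p - (Ω2 p * a / (2 * l ^ 2)) * ψ p)
    (hT1 : ∀ p ∈ U, pdu ϖ₁ p = -(8 * Real.pi) * (r p) ^ 2 * (pdv r p / Ω2 p) * (pdu ψ p) ^ 2
        + (4 * Real.pi * (r p) ^ 2 * a / l ^ 2) * pdu r p * (ψ p) ^ 2)
    (hT2 : ∀ p ∈ U, pdv ϖ₁ p = -(8 * Real.pi) * (r p) ^ 2 * (pdu r p / Ω2 p) * (pdv ψ p) ^ 2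
        + (4 * Real.pi * (r p) ^ 2 * a / l ^ 2) * pdv r p * (ψ p) ^ 2) :
    ∀ p ∈ U,
      pdu (fun q => pdu r q / Ω2 q) p = -(4 * Real.pi) * r p * (pdu ψ p) ^ 2 / Ω2 p ∧
      pdv (fun q => pdv r q / Ω2 q) p = -(4 * Real.pi) * r p * (pdv ψ p) ^ 2 / Ω2 p :=
  stmt_3_general U hU r ψ ϖ₁ Ω2 l a hl hrC hϖC hrpos hru hrv hne hΩ2 hEKG3 hT1 hT2
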